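/- In the topological setting, for every t with γ_min ≤ t < γ_max one has N_t ≠ ∅ and N_t ≠ Θ. -/

import Mathlib

open MeasureTheory Filter Topology

/-- The general setting of the paper: a measurable base system with invertible
driving map `T`, a concave fibre function `h` (with its derivative `h'` on `[0,∞)`)
and a bounded measurable positive function `g`. -/
structure Setting (Θ : Type*) [MeasurableSpace Θ] where
  T : Θ → Θ
  Tinv : Θ → Θ
  left_inv : Function.LeftInverse Tinv T
  right_inv : Function.RightInverse Tinv T
  T_meas : Measurable T
  Tinv_meas : Measurable Tinv
  h : ℝ → ℝ
  h' : ℝ → ℝ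
  h_hasDeriv : ∀ x ∈ Set.Ici (0 : ℝ), HasDerivWithinAt h (h' x) (Set.Ici 0) x
  h'_cont : ContinuousOn h' (Set.Ici 0)
  h_strictConcave : StrictConcaveOn ℝ (Set.Ici 0) h
  h_zero : h 0 = 0
  h'_pos : ∀ x : ℝ, 0 < x → 0 < h' x
  h'_zero : h' 0 = 1
  h_sublinear : Tendsto (fun x => h x / x) atTop (𝓝 0)
  g : Θ → ℝ
  g_pos : ∀ θ, 0 < g θ
  g_bdd : ∃ C : ℝ, ∀ θ, g θ ≤ C
  g_meas : Measurable g

namespace Setting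

variable {Θ : Type*} [MeasurableSpace Θ]

/-- The fibre maps `f_t(θ,x) = e^{-t} g(θ) h(x)`. -/
noncomputable def f (S : Setting Θ) (t : ℝ) (θ : Θ) (x : ℝ) : ℝ :=
  Real.exp (-t) * S.g θ * S.h x

/-- The iterated fibre maps: `fn t 0 θ x = x` and
`fn t (n+1) θ x = f t (T^[n] θ) (fn t n θ x)`, so that `fn t 1 = f t`. -/
noncomputable def fn (S : Setting Θ) (t : ℝ) : ℕ → Θ → ℝ → ℝ
  | 0, _, x => x
  | n + 1, θ, x => S.f t (S.T^[n] θ) (S.fn t n θ x)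

/-- `ψ_{t,n}(θ) = f_t^n(T^{-n}θ, M)`. -/
noncomputable def ψ (S : Setting Θ) (t M : ℝ) (n : ℕ) (θ : Θ) : ℝ :=
  S.fn t n (S.Tinv^[n] θ) M

/-- The maximal invariant function `φ_t(θ) = inf_{n ≥ 1} ψ_{t,n}(θ)`. -/
noncomputable def φ (S : Setting Θ) (t M : ℝ) (θ : Θ) : ℝ :=
  ⨅ n : ℕ, S.ψ t M (n + 1) θ

/-- The zero set `N_t = {θ : φ_t(θ) = 0}`. -/
noncomputable def Nset (S : Setting Θ) (t M : ℝ) : Set Θ := {θ | S.φ t M θ = 0}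

/-- The critical parameter `t_c(θ) = inf {t : φ_t(θ) = 0}`. -/
noncomputable def tc (S : Setting Θ) (M : ℝ → ℝ) (θ : Θ) : ℝ :=
  sInf {t : ℝ | S.φ t (M t) θ = 0}

/-- The bifurcation set `S_t = {θ : t_c(θ) = t}`. -/
noncomputable def Sset (S : Setting Θ) (M : ℝ → ℝ) (t : ℝ) : Set Θ :=
  {θ | S.tc M θ = t}

/-- The Birkhoff average `Γ^{(n)}(θ) = (1/n) ∑_{k=1}^n log g(T^{-k}θ)`. -/
noncomputable def Γn (S : Setting Θ) (n : ℕ) (θ : Θ) : ℝ :=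
  (∑ k ∈ Finset.range n, Real.log (S.g (S.Tinv^[k + 1] θ))) / n

/-- The lower backwards Lyapunov average `Γ(θ) = liminf_n Γ^{(n)}(θ)`. -/
noncomputable def Γ (S : Setting Θ) (θ : Θ) : ℝ :=
  Filter.liminf (fun n : ℕ => S.Γn n θ) Filter.atTop

/-- The averaged exponent `γ(μ) = ∫ log g dμ`. -/
noncomputable def γfn (S : Setting Θ) (μ : Measure Θ) : ℝ :=
  ∫ θ, Real.log (S.g θ) ∂μ

/-- The function `H(x) = log (h(x)/x)`. -/
noncomputable def Hfn (S : Setting Θ) (x : ℝ) : ℝ := Real.log (S.h x / x)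

end Setting

/-- The set of averaged exponents `γ(μ)` of `T`-invariant Borel probability measures. -/
def Setting.γSet {Θ : Type*} [MeasurableSpace Θ] (S : Setting Θ) : Set ℝ :=
  {x : ℝ | ∃ μ : MeasureTheory.Measure Θ, MeasureTheory.IsProbabilityMeasure μ ∧
    MeasureTheory.MeasurePreserving S.T μ μ ∧ x = S.γfn μ}

/-- `γ_min`. -/
noncomputable def Setting.γmin {Θ : Type*} [MeasurableSpace Θ] (S : Setting Θ) : ℝ :=
  sInf S.γSet

/-- `γ_max`. -/
noncomputable def Setting.γmax {Θ : Type*} [MeasurableSpace Θ] (S : Setting Θ) : ℝ :=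
  sSup S.γSet

/-!
Along a backward orbit, `a k = φ_t(T^{-k}θ)` satisfies `a k = e^{-t} g(T^{-(k+1)}θ) h(a (k+1))`,
so the products `∏_{k<n} e^{-t} g(T^{-(k+1)}θ) = exp (B_n - n t)`, where `B_n` are the backward
Birkhoff sums of `log g`, decide whether `φ_t(θ)` vanishes. If `B_n ≤ n t` for all `n`, then
`h x ≤ x` keeps `a k ≥ a 0`, and `h x ≤ (h (a 0) / a 0) x` with `h (a 0) < a 0` makes `a 0` decay
geometrically, so `φ_t(θ) = 0`. If `B_n ≥ n (t + ε)`, then `h y ≥ e^{-ε} y` near `0` keeps every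
`ψ_{t,n}(θ)` above a fixed `δ > 0`, so `φ_t(θ) > 0`.

Such points exist by a semi-uniform ergodic argument on the compact space `Θ`: if an invariant
measure gives a continuous `v` positive mean, some point has all Birkhoff sums of `v` nonnegative,
since otherwise compactness bounds all Birkhoff sums uniformly from above while their integrals
grow linearly. This is applied to measures with `γ(μ) > t`, and to measures with `γ(μ)` close to
`γ_min ≤ t`, where a nested intersection of compact sets handles the infimum not being attained.
-/

open Set

section Telescoping

theorem le_prod_mul_of_le_mul_succ {a c : ℕ → ℝ} (hc : ∀ k, 0 ≤ c k)
    (h : ∀ k, a k ≤ c k * a (k + 1)) (n : ℕ) :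
    a 0 ≤ (∏ k ∈ Finset.range n, c k) * a n := by
  induction n with
  | zero => simp
  | succ n ih =>
    calc a 0 ≤ (∏ k ∈ Finset.range n, c k) * a n := ih
      _ ≤ (∏ k ∈ Finset.range n, c k) * (c n * a (n + 1)) :=
          mul_le_mul_of_nonneg_left (h n) (Finset.prod_nonneg fun k _ => hc k)
      _ = (∏ k ∈ Finset.range (n + 1), c k) * a (n + 1) := by
          rw [Finset.prod_range_succ, mul_assoc]

/-- `hΦ_zero` and `hΦ_succ` say that `Φ n = F 0 ∘ ⋯ ∘ F (n - 1)`. -/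
theorem min_le_of_le_mul_of_one_le_prod {F Φ : ℕ → ℝ → ℝ} {c : ℕ → ℝ} {δ : ℝ}
    (hΦ_zero : ∀ y, Φ 0 y = y) (hΦ_succ : ∀ n y, Φ (n + 1) y = Φ n (F n y))
    (hF_mono : ∀ k, MonotoneOn (F k) (Ioi 0))
    (hF_ge : ∀ k y, 0 < y → y ≤ δ → c k * y ≤ F k y)
    (hc : ∀ k, 0 < c k) (hprod : ∀ n, 1 ≤ ∏ k ∈ Finset.range n, c k) (hδ : 0 < δ)
    (n : ℕ) {y : ℝ} (hy : 0 < y) : min y δ ≤ Φ n y := by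
  -- Each step either lands above `δ` or multiplies a point below `δ` by at least `c k`.
  suffices key : ∀ n y, 0 < y → min δ ((∏ k ∈ Finset.range n, c k) * min y δ) ≤ Φ n y by
    refine le_trans ?_ (key n y hy)
    exact le_min (min_le_right y δ) (le_mul_of_one_le_left (lt_min hy hδ).le (hprod n))
  intro n
  induction n with
  | zero =>
    intro y _
    simp [hΦ_zero]
  | succ n ih =>
    intro y hy
    set m := min y δ
    set P := ∏ k ∈ Finset.range n, c k
    have hm : 0 < m := lt_min hy hδ
    have hFm : c n * m ≤ F n y :=
      (hF_ge n m hm (min_le_right y δ)).trans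
        (hF_mono n hm hy (min_le_left y δ))
    refine le_trans ?_ ((ih (F n y) ((mul_pos (hc n) hm).trans_le hFm)).trans_eq
      (hΦ_succ n y).symm)
    refine le_min (min_le_left _ _) ?_
    rcases le_or_gt δ (F n y) with hδF | hFδ
    · rw [min_eq_right hδF]
      exact (min_le_left _ _).trans (le_mul_of_one_le_left hδ.le (hprod n))
    · rw [min_eq_left hFδ.le, Finset.prod_range_succ, mul_assoc]
      exact (min_le_right _ _).trans
        (mul_le_mul_of_nonneg_left hFm (zero_le_one.trans (hprod n)))

end Telescoping

section Birkhoff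

variable {X : Type*} {R : X → X} {v : X → ℝ}

theorem birkhoffSum_le_of_forall_exists_birkhoffSum_neg {N : ℕ} {C : ℝ}
    (hvC : ∀ x, v x ≤ C) (hC : 0 ≤ C) (hneg : ∀ x, ∃ n ≤ N, birkhoffSum R v n x < 0)
    (m : ℕ) (x : X) : birkhoffSum R v m x ≤ N * C := by
  induction m using Nat.strong_induction_on generalizing x with
  | _ m ih =>
    by_cases hmN : m ≤ N
    · calc birkhoffSum R v m x ≤ m * C := by
            simpa [birkhoffSum] using
              Finset.sum_le_card_nsmul (Finset.range m) _ C fun k _ => hvC (R^[k] x)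
        _ ≤ N * C := mul_le_mul_of_nonneg_right (by exact_mod_cast hmN) hC
    · obtain ⟨n, hnN, hn⟩ := hneg x
      have hn0 : n ≠ 0 := by rintro rfl; simp at hn
      have hsplit := birkhoffSum_add R v n (m - n) x
      rw [Nat.add_sub_cancel' (by omega)] at hsplit
      linarith [ih (m - n) (by omega) (R^[n] x)]

theorem MeasureTheory.MeasurePreserving.integral_birkhoffSum [MeasurableSpace X]
    {μ : Measure X} (hR : MeasurePreserving R μ μ) (hv : Integrable v μ) (n : ℕ) :
    ∫ x, birkhoffSum R v n x ∂μ = n * ∫ x, v x ∂μ := by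
  have hcomp : ∀ k, ∫ x, v (R^[k] x) ∂μ = ∫ x, v x ∂μ := fun k => by
    rw [← integral_map (hR.iterate k).measurable.aemeasurable
      (by rw [(hR.iterate k).map_eq]; exact hv.aestronglyMeasurable), (hR.iterate k).map_eq]
  simp only [birkhoffSum]
  rw [integral_finsetSum (f := fun k x => v (R^[k] x)) _
    fun k _ => (hR.iterate k).integrable_comp_of_integrable hv]
  simp [hcomp]

variable [TopologicalSpace X]

theorem continuous_birkhoffSum (hR : Continuous R) (hv : Continuous v)
    (n : ℕ) : Continuous (birkhoffSum R v n) :=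
  continuous_finsetSum _ fun k _ => hv.comp (hR.iterate k)

variable [CompactSpace X] [MeasurableSpace X] [OpensMeasurableSpace X]

theorem exists_forall_birkhoffSum_nonneg (hR : Continuous R) (hv : Continuous v)
    {μ : Measure X} [IsProbabilityMeasure μ] (hμ : MeasurePreserving R μ μ)
    (hint : 0 < ∫ x, v x ∂μ) : ∃ x, ∀ n, 0 ≤ birkhoffSum R v n x := by
  by_contra! hneg
  have hcont := continuous_birkhoffSum hR hv
  obtain ⟨s, hs⟩ := isCompact_univ.elim_finite_subcover (fun n => {x | birkhoffSum R v n x < 0})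
    (fun n => isOpen_lt (hcont n) continuous_const)
    (fun x _ => mem_iUnion.2 (hneg x))
  have hneg' : ∀ x, ∃ n ≤ s.sup id, birkhoffSum R v n x < 0 := fun x => by
    obtain ⟨n, hns, hn⟩ := mem_iUnion₂.1 (hs (mem_univ x))
    exact ⟨n, Finset.le_sup (f := id) hns, hn⟩
  obtain ⟨C, hC⟩ := (isCompact_range hv).bddAbove
  have hvC : ∀ x, v x ≤ max C 0 := fun x => (hC (mem_range_self x)).trans (le_max_left _ _)
  have hbound : ∀ m : ℕ, m * ∫ x, v x ∂μ ≤ s.sup id * max C 0 := fun m => by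
    rw [← hμ.integral_birkhoffSum (hv.integrable_of_hasCompactSupport
      (HasCompactSupport.of_compactSpace v)) m]
    refine (integral_mono ((hcont m).integrable_of_hasCompactSupport
      (HasCompactSupport.of_compactSpace _)) (integrable_const _) fun x =>
        birkhoffSum_le_of_forall_exists_birkhoffSum_neg hvC (le_max_right _ _) hneg' m x).trans ?_
    simp
  obtain ⟨m, hm⟩ := exists_nat_gt ((s.sup id * max C 0) / ∫ x, v x ∂μ)
  rw [div_lt_iff₀ hint] at hm
  linarith [hbound m]

theorem exists_forall_mul_le_birkhoffSum (hR : Continuous R) (hv : Continuous v)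
    {μ : Measure X} [IsProbabilityMeasure μ] (hμ : MeasurePreserving R μ μ) {c : ℝ}
    (hc : c < ∫ x, v x ∂μ) : ∃ x, ∀ n : ℕ, n * c ≤ birkhoffSum R v n x := by
  have hint : 0 < ∫ x, (v x - c) ∂μ := by
    rw [integral_sub (hv.integrable_of_hasCompactSupport (HasCompactSupport.of_compactSpace v))
      (integrable_const c)]
    simpa using hc
  obtain ⟨x, hx⟩ := exists_forall_birkhoffSum_nonneg hR (hv.sub continuous_const) hμ hint
  refine ⟨x, fun n => ?_⟩
  have := hx n
  simp only [birkhoffSum, Pi.sub_apply, Finset.sum_sub_distrib, Finset.sum_const,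
    Finset.card_range, nsmul_eq_mul, sub_nonneg] at this
  exact this

theorem exists_forall_birkhoffSum_le_mul (hR : Continuous R) (hv : Continuous v)
    {μ : Measure X} [IsProbabilityMeasure μ] (hμ : MeasurePreserving R μ μ) {c : ℝ}
    (hc : ∫ x, v x ∂μ < c) : ∃ x, ∀ n : ℕ, birkhoffSum R v n x ≤ n * c := by
  obtain ⟨x, hx⟩ := exists_forall_mul_le_birkhoffSum hR hv.neg hμ (c := -c)
    (by simp only [Pi.neg_apply, integral_neg]; linarith)
  refine ⟨x, fun n => ?_⟩
  have := hx n
  rw [birkhoffSum_neg] at this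
  linarith

theorem exists_forall_birkhoffSum_le_mul_of_forall_lt (hR : Continuous R) (hv : Continuous v)
    {c : ℝ} (hc : ∀ ε > 0, ∃ μ : Measure X, IsProbabilityMeasure μ ∧ MeasurePreserving R μ μ ∧
      ∫ x, v x ∂μ < c + ε) :
    ∃ x, ∀ n : ℕ, birkhoffSum R v n x ≤ n * c := by
  let A : Ioi (0 : ℝ) → Set X := fun ε => {x | ∀ n : ℕ, birkhoffSum R v n x ≤ n * (c + ε)}
  have hA_closed : ∀ ε, IsClosed (A ε) := fun ε => by
    simp only [A, ofPred_forall]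
    exact isClosed_iInter fun n => isClosed_le (continuous_birkhoffSum hR hv n) continuous_const
  have hA_mono : Monotone A := fun ε ε' hεε' x hx n =>
    (hx n).trans (mul_le_mul_of_nonneg_left (by simpa using hεε') n.cast_nonneg)
  have hA_nonempty : ∀ ε, (A ε).Nonempty := fun ε => by
    obtain ⟨μ, _, hμ, hlt⟩ := hc ε ε.2
    exact exists_forall_birkhoffSum_le_mul hR hv hμ hlt
  obtain ⟨x, hx⟩ := IsCompact.nonempty_iInter_of_directed_nonempty_isCompact_isClosed A
    hA_mono.directed_ge hA_nonempty (fun ε => (hA_closed ε).isCompact) hA_closed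
  refine ⟨x, fun n => ge_of_tendsto (f := fun ε => (n : ℝ) * (c + ε)) (x := 𝓝[>] 0) ?_ ?_⟩
  · exact tendsto_nhdsWithin_of_tendsto_nhds (by
      simpa using ((continuous_const.add continuous_id).const_mul (n : ℝ)).tendsto 0)
  · filter_upwards [self_mem_nhdsWithin] with ε hε using mem_iInter.1 hx ⟨ε, hε⟩ n

end Birkhoff

namespace Setting

variable {Θ : Type*} [MeasurableSpace Θ] (S : Setting Θ)

theorem measurePreserving_Tinv {μ : Measure Θ} (hμ : MeasurePreserving S.T μ μ) :
    MeasurePreserving S.Tinv μ μ :=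
  MeasurePreserving.symm ⟨⟨S.T, S.Tinv, S.left_inv, S.right_inv⟩, S.T_meas, S.Tinv_meas⟩ hμ

theorem T_iterate_Tinv_succ (θ : Θ) (n : ℕ) : S.T (S.Tinv^[n + 1] θ) = S.Tinv^[n] θ := by
  rw [Function.iterate_succ_apply', S.right_inv]

section Concave

theorem continuousOn_h : ContinuousOn S.h (Ici 0) :=
  fun x hx => (S.h_hasDeriv x hx).continuousWithinAt

theorem tendsto_h_div_self : Tendsto (fun y => S.h y / y) (𝓝[>] 0) (𝓝 1) := by
  have hslope := hasDerivWithinAt_iff_tendsto_slope.1 (S.h_hasDeriv 0 self_mem_Ici)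
  rw [S.h'_zero, Ici_sdiff_left] at hslope
  refine hslope.congr' (Eventually.of_forall fun y => ?_)
  simp [slope_def_field, S.h_zero]

theorem strictMonoOn_h : StrictMonoOn S.h (Ici 0) := by
  refine strictMonoOn_of_deriv_pos (convex_Ici 0) S.continuousOn_h fun x hx => ?_
  rw [interior_Ici, mem_Ioi] at hx
  rw [((S.h_hasDeriv x hx.le).hasDerivAt (Ici_mem_nhds hx)).deriv]
  exact S.h'_pos x hx

theorem h_nonneg {x : ℝ} (hx : 0 ≤ x) : 0 ≤ S.h x :=
  S.h_zero ▸ S.strictMonoOn_h.monotoneOn self_mem_Ici hx hx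

theorem antitoneOn_h_div_self : AntitoneOn (fun x => S.h x / x) (Ioi 0) := by
  intro x (hx : 0 < x) y (hy : 0 < y) hxy
  have := S.h_strictConcave.concaveOn.neg.secant_mono self_mem_Ici hx.le hy.le
    hx.ne' hy.ne' hxy
  simp only [Pi.neg_apply, S.h_zero, neg_zero, sub_zero] at this
  simpa [neg_div] using this

theorem h_le_self {x : ℝ} (hx : 0 ≤ x) : S.h x ≤ x := by
  rcases hx.eq_or_lt with rfl | hx
  · simp [S.h_zero]
  have : S.h x / x ≤ 1 := ge_of_tendsto S.tendsto_h_div_self <| by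
    filter_upwards [Ioo_mem_nhdsGT hx] with y hy
    exact S.antitoneOn_h_div_self hy.1 hx hy.2.le
  rwa [div_le_one hx] at this

theorem h_lt_self {x : ℝ} (hx : 0 < x) : S.h x < x := by
  have hmid := S.h_strictConcave.2 self_mem_Ici (le_of_lt hx) hx.ne (by norm_num : (0:ℝ) < 1 / 2)
    (by norm_num : (0:ℝ) < 1 / 2) (by norm_num)
  simp only [smul_eq_mul, S.h_zero, mul_zero, zero_add] at hmid
  linarith [S.h_le_self (by linarith : 0 ≤ 1 / 2 * x)]

theorem eventually_mul_le_h {c : ℝ} (hc : c < 1) : ∀ᶠ y in 𝓝[>] 0, c * y ≤ S.h y := by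
  filter_upwards [S.tendsto_h_div_self.eventually (eventually_gt_nhds hc), self_mem_nhdsWithin]
    with y hy hy0
  exact ((lt_div_iff₀ hy0).1 hy).le

end Concave

section Dynamics

variable (t : ℝ)

theorem monotoneOn_f (θ : Θ) : MonotoneOn (S.f t θ) (Ici 0) := fun _ hx _ hy hxy =>
  mul_le_mul_of_nonneg_left (S.strictMonoOn_h.monotoneOn hx hy hxy)
    (mul_pos (Real.exp_pos _) (S.g_pos θ)).le

theorem f_nonneg (θ : Θ) {x : ℝ} (hx : 0 ≤ x) : 0 ≤ S.f t θ x :=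
  mul_nonneg (mul_pos (Real.exp_pos _) (S.g_pos θ)).le (S.h_nonneg hx)

theorem fn_succ' (n : ℕ) (θ : Θ) (x : ℝ) :
    S.fn t (n + 1) θ x = S.fn t n (S.T θ) (S.f t θ x) := by
  induction n with
  | zero => rfl
  | succ n ih =>
    change S.f t _ (S.fn t (n + 1) θ x) = S.f t _ (S.fn t n (S.T θ) (S.f t θ x))
    rw [ih, Function.iterate_succ_apply]

theorem fn_mem_Icc {M : ℝ} (hMf : ∀ θ, S.f t θ M ≤ M) (n : ℕ) (θ : Θ) {x : ℝ}
    (hx : x ∈ Icc 0 M) : S.fn t n θ x ∈ Icc 0 M := by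
  induction n with
  | zero => exact hx
  | succ n ih =>
    exact ⟨S.f_nonneg t _ ih.1,
      (S.monotoneOn_f t _ ih.1 (ih.1.trans ih.2) ih.2).trans (hMf _)⟩

theorem ψ_mem_Icc {M : ℝ} (hM : 0 ≤ M) (hMf : ∀ θ, S.f t θ M ≤ M) (n : ℕ) (θ : Θ) :
    S.ψ t M n θ ∈ Icc 0 M :=
  S.fn_mem_Icc t hMf n _ ⟨hM, le_rfl⟩

theorem ψ_succ_apply_T (M : ℝ) (n : ℕ) (θ : Θ) :
    S.ψ t M (n + 1) (S.T θ) = S.f t θ (S.ψ t M n θ) := by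
  have hT : S.T^[n] (S.Tinv^[n] θ) = θ :=
    (Function.RightInverse.iterate S.right_inv n) θ
  simp only [ψ, Function.iterate_succ_apply, S.left_inv θ]
  change S.f t _ _ = _
  rw [hT]

theorem ψ_succ_le {M : ℝ} (hM : 0 ≤ M) (hMf : ∀ θ, S.f t θ M ≤ M) (n : ℕ) (θ : Θ) :
    S.ψ t M (n + 1) θ ≤ S.ψ t M n θ := by
  induction n generalizing θ with
  | zero => exact hMf _
  | succ n ih =>
    rw [← S.right_inv θ, S.ψ_succ_apply_T, S.ψ_succ_apply_T]
    exact S.monotoneOn_f t _ (S.ψ_mem_Icc t hM hMf _ _).1 (S.ψ_mem_Icc t hM hMf _ _).1 (ih _)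

theorem φ_mem_Icc {M : ℝ} (hM : 0 ≤ M) (hMf : ∀ θ, S.f t θ M ≤ M) (θ : Θ) :
    S.φ t M θ ∈ Icc 0 M :=
  ⟨le_ciInf fun n => (S.ψ_mem_Icc t hM hMf _ θ).1,
    (ciInf_le ⟨0, by rintro _ ⟨n, rfl⟩; exact (S.ψ_mem_Icc t hM hMf _ θ).1⟩ 0).trans
      (S.ψ_mem_Icc t hM hMf 1 θ).2⟩

theorem tendsto_ψ {M : ℝ} (hM : 0 ≤ M) (hMf : ∀ θ, S.f t θ M ≤ M) (θ : Θ) :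
    Tendsto (fun n => S.ψ t M n θ) atTop (𝓝 (S.φ t M θ)) := by
  refine (tendsto_add_atTop_iff_nat 1).1 (tendsto_atTop_ciInf ?_ ?_)
  · exact antitone_nat_of_succ_le fun n => S.ψ_succ_le t hM hMf (n + 1) θ
  · exact ⟨0, by rintro _ ⟨n, rfl⟩; exact (S.ψ_mem_Icc t hM hMf _ θ).1⟩

theorem φ_apply_T {M : ℝ} (hM : 0 ≤ M) (hMf : ∀ θ, S.f t θ M ≤ M) (θ : Θ) :
    S.φ t M (S.T θ) = S.f t θ (S.φ t M θ) := by
  have hcont : ContinuousWithinAt (S.f t θ) (Ici 0) (S.φ t M θ) :=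
    (continuousWithinAt_const.mul (S.continuousOn_h _ (S.φ_mem_Icc t hM hMf θ).1))
  refine tendsto_nhds_unique ((tendsto_add_atTop_iff_nat 1).2 (S.tendsto_ψ t hM hMf (S.T θ))) ?_
  simp only [S.ψ_succ_apply_T]
  exact hcont.tendsto.comp (tendsto_nhdsWithin_iff.2
    ⟨S.tendsto_ψ t hM hMf θ, Eventually.of_forall fun n => (S.ψ_mem_Icc t hM hMf n θ).1⟩)

theorem prod_exp_neg_mul_g (θ : Θ) (n : ℕ) :
    ∏ k ∈ Finset.range n, Real.exp (-t) * S.g (S.Tinv^[k + 1] θ) =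
      Real.exp (birkhoffSum S.Tinv (Real.log ∘ S.g) n (S.Tinv θ) - n * t) := by
  calc ∏ k ∈ Finset.range n, Real.exp (-t) * S.g (S.Tinv^[k + 1] θ)
      = ∏ k ∈ Finset.range n, Real.exp (Real.log (S.g (S.Tinv^[k] (S.Tinv θ))) + -t) :=
        Finset.prod_congr rfl fun k _ => by
          rw [Real.exp_add, Real.exp_log (S.g_pos _), Function.iterate_succ_apply, mul_comm]
    _ = _ := by
        rw [← Real.exp_sum, Finset.sum_add_distrib]
        simp [birkhoffSum, sub_eq_add_neg]

end Dynamics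

section ZeroSetCriterion

variable {t M : ℝ}

theorem φ_eq_zero_of_birkhoffSum_le (hM : 0 ≤ M) (hMf : ∀ θ, S.f t θ M ≤ M) {θ : Θ}
    (hθ : ∀ n : ℕ, birkhoffSum S.Tinv (Real.log ∘ S.g) n (S.Tinv θ) ≤ n * t) :
    S.φ t M θ = 0 := by
  set a : ℕ → ℝ := fun k => S.φ t M (S.Tinv^[k] θ)
  set G : ℕ → ℝ := fun k => Real.exp (-t) * S.g (S.Tinv^[k + 1] θ)
  have ha_mem : ∀ k, a k ∈ Icc 0 M := fun k => S.φ_mem_Icc t hM hMf _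
  have ha_succ : ∀ k, a k = G k * S.h (a (k + 1)) := fun k => by
    simp only [a, G, ← S.T_iterate_Tinv_succ θ k, S.φ_apply_T t hM hMf]; rfl
  have hG : ∀ k, 0 ≤ G k := fun k => (mul_pos (Real.exp_pos _) (S.g_pos _)).le
  have hG_prod : ∀ n, ∏ k ∈ Finset.range n, G k ≤ 1 := fun n => by
    rw [S.prod_exp_neg_mul_g, Real.exp_le_one_iff]
    linarith [hθ n]
  by_contra hne
  have ha0 : 0 < a 0 := lt_of_le_of_ne (ha_mem 0).1 (Ne.symm hne)
  have ha_ge : ∀ n, a 0 ≤ a n := fun n =>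
    (le_prod_mul_of_le_mul_succ hG (fun k => (ha_succ k).trans_le
      (mul_le_mul_of_nonneg_left (S.h_le_self (ha_mem _).1) (hG k))) n).trans
      (mul_le_of_le_one_left (ha_mem n).1 (hG_prod n))
  set r := S.h (a 0) / a 0
  have hr : r < 1 := (div_lt_one ha0).2 (S.h_lt_self ha0)
  have hr0 : 0 ≤ r := div_nonneg (S.h_nonneg ha0.le) ha0.le
  have h_contract : ∀ k, S.h (a (k + 1)) ≤ r * a (k + 1) := fun k => by
    have hk : 0 < a (k + 1) := ha0.trans_le (ha_ge _)
    have := S.antitoneOn_h_div_self ha0 hk (ha_ge _)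
    rwa [div_le_iff₀ hk] at this
  have hdecay : ∀ n, a 0 ≤ r ^ n * M := fun n => by
    have := le_prod_mul_of_le_mul_succ (c := fun k => G k * r) (fun k => mul_nonneg (hG k) hr0)
      (fun k => (ha_succ k).trans_le ((mul_le_mul_of_nonneg_left (h_contract k) (hG k)).trans_eq
        (mul_assoc _ _ _).symm)) n
    rw [Finset.prod_mul_distrib, Finset.prod_const, Finset.card_range] at this
    calc a 0 ≤ (∏ k ∈ Finset.range n, G k) * r ^ n * a n := this
      _ ≤ 1 * r ^ n * M := mul_le_mul (mul_le_mul_of_nonneg_right (hG_prod n) (pow_nonneg hr0 n))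
          (ha_mem n).2 (ha_mem n).1 (by positivity)
      _ = r ^ n * M := by ring
  have hM0 : 0 < M := ha0.trans_le (ha_mem 0).2
  obtain ⟨n, hn⟩ := exists_pow_lt_of_lt_one (div_pos ha0 hM0) hr
  linarith [hdecay n, (lt_div_iff₀ hM0).1 hn]

theorem φ_pos_of_le_birkhoffSum (hM : 0 < M) {ε : ℝ} (hε : 0 < ε) {θ : Θ}
    (hθ : ∀ n : ℕ, n * (t + ε) ≤ birkhoffSum S.Tinv (Real.log ∘ S.g) n (S.Tinv θ)) :
    0 < S.φ t M θ := by
  obtain ⟨δ, hδ, hδh⟩ := mem_nhdsGT_iff_exists_Ioc_subset.1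
    (S.eventually_mul_le_h (Real.exp_lt_one_iff.2 (neg_lt_zero.2 hε)))
  set c : ℕ → ℝ := fun k => Real.exp (-t) * S.g (S.Tinv^[k + 1] θ) * Real.exp (-ε)
  have hc : ∀ k, 0 < c k := fun k => by positivity [S.g_pos (S.Tinv^[k + 1] θ)]
  have hc_prod : ∀ n, 1 ≤ ∏ k ∈ Finset.range n, c k := fun n => by
    rw [Finset.prod_mul_distrib, S.prod_exp_neg_mul_g, Finset.prod_const, Finset.card_range,
      ← Real.exp_nat_mul, ← Real.exp_add]
    exact Real.one_le_exp (by linarith [hθ n])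
  have hψ : ∀ n, min M δ ≤ S.ψ t M n θ := fun n =>
    min_le_of_le_mul_of_one_le_prod (F := fun k => S.f t (S.Tinv^[k + 1] θ))
      (Φ := fun n => S.fn t n (S.Tinv^[n] θ)) (fun _ => rfl)
      (fun n y => by simp only [S.fn_succ', S.T_iterate_Tinv_succ])
      (fun k => (S.monotoneOn_f t _).mono Ioi_subset_Ici_self)
      (fun k y hy hyδ => by
        rw [mul_assoc]
        exact mul_le_mul_of_nonneg_left (hδh ⟨hy, hyδ⟩)
          (mul_pos (Real.exp_pos _) (S.g_pos _)).le)
      hc hc_prod hδ n hM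
  exact (lt_min hM hδ).trans_le (le_ciInf fun n => hψ (n + 1))

end ZeroSetCriterion

section BackwardOrbits

variable [TopologicalSpace Θ] [CompactSpace Θ] [OpensMeasurableSpace Θ] {t : ℝ}

theorem exists_forall_birkhoffSum_le_of_γmin_le (hTinv : Continuous S.Tinv)
    (hg : Continuous S.g) (hne : S.γSet.Nonempty) (ht : S.γmin ≤ t) :
    ∃ θ, ∀ n : ℕ, birkhoffSum S.Tinv (Real.log ∘ S.g) n (S.Tinv θ) ≤ n * t := by
  obtain ⟨x, hx⟩ := exists_forall_birkhoffSum_le_mul_of_forall_lt hTinv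
    (hg.log fun θ => (S.g_pos θ).ne') fun ε hε => by
      obtain ⟨_, ⟨μ, hμ, hTμ, rfl⟩, hlt⟩ :=
        exists_lt_of_csInf_lt hne (ht.trans_lt (lt_add_of_pos_right t hε))
      exact ⟨μ, hμ, S.measurePreserving_Tinv hTμ, hlt⟩
  exact ⟨S.T x, by rw [S.left_inv x]; exact hx⟩

theorem exists_forall_le_birkhoffSum_of_lt_γmax (hTinv : Continuous S.Tinv)
    (hg : Continuous S.g) (hne : S.γSet.Nonempty) (ht : t < S.γmax) :
    ∃ ε > 0, ∃ θ, ∀ n : ℕ, n * (t + ε) ≤ birkhoffSum S.Tinv (Real.log ∘ S.g) n (S.Tinv θ) := by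
  obtain ⟨_, ⟨μ, hμ, hTμ, rfl⟩, hlt⟩ := exists_lt_of_lt_csSup hne ht
  obtain ⟨x, hx⟩ := exists_forall_mul_le_birkhoffSum hTinv (hg.log fun θ => (S.g_pos θ).ne')
    (S.measurePreserving_Tinv hTμ) (c := t + (S.γfn μ - t) / 2)
    (by change _ < S.γfn μ; linarith)
  exact ⟨(S.γfn μ - t) / 2, by linarith, S.T x, by rw [S.left_inv x]; exact hx⟩

end BackwardOrbits

end Setting

theorem stmt17_general {Θ : Type*} [TopologicalSpace Θ] [CompactSpace Θ]
    [MeasurableSpace Θ] [BorelSpace Θ]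
    (S : Setting Θ) (hTinv : Continuous S.Tinv)
    (hgc : Continuous S.g)
    (M : ℝ → ℝ) (hM : ∀ t, 0 < M t) (hMf : ∀ t θ, S.f t θ (M t) < M t)
    (t : ℝ) (ht1 : S.γmin ≤ t) (ht2 : t < S.γmax) :
    S.Nset t (M t) ≠ ∅ ∧ S.Nset t (M t) ≠ Set.univ := by
  have hne : S.γSet.Nonempty := by
    by_contra h
    rw [Set.not_nonempty_iff_eq_empty] at h
    simp only [Setting.γmin, Setting.γmax, h, Real.sInf_empty, Real.sSup_empty] at ht1 ht2
    linarith
  obtain ⟨θ₀, hθ₀⟩ := S.exists_forall_birkhoffSum_le_of_γmin_le hTinv hgc hne ht1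
  obtain ⟨ε, hε, θ₁, hθ₁⟩ := S.exists_forall_le_birkhoffSum_of_lt_γmax hTinv hgc hne ht2
  refine ⟨Set.nonempty_iff_ne_empty.1 ⟨θ₀, ?_⟩, fun huniv => ?_⟩
  · exact S.φ_eq_zero_of_birkhoffSum_le (hM t).le (fun θ => (hMf t θ).le) hθ₀
  · exact (S.φ_pos_of_le_birkhoffSum (hM t) hε hθ₁).ne' (Set.eq_univ_iff_forall.1 huniv θ₁)

/-- in the topological setting, for `γ_min ≤ t < γ_max` one has
`N_t ≠ ∅` and `N_t ≠ Θ`. -/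
theorem stmt17 {Θ : Type*} [TopologicalSpace Θ] [CompactSpace Θ] [Nonempty Θ]
    [TopologicalSpace.MetrizableSpace Θ] [MeasurableSpace Θ] [BorelSpace Θ]
    (S : Setting Θ) (hT : Continuous S.T) (hTinv : Continuous S.Tinv)
    (hgc : Continuous S.g)
    (M : ℝ → ℝ) (hM : ∀ t, 0 < M t) (hMf : ∀ t θ, S.f t θ (M t) < M t)
    (t : ℝ) (ht1 : S.γmin ≤ t) (ht2 : t < S.γmax) :
    S.Nset t (M t) ≠ ∅ ∧ S.Nset t (M t) ≠ Set.univ :=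
  stmt17_general S hTinv hgc M hM hMf t ht1 ht2
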